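/- arXiv:1702.01012 — 3 statements merged into one kernel-verified Lean document; each statement's English description precedes it below -/
import Mathlib

section
/- Let p, q, r, s be real numbers with p ≤ s, q ∈ [p,s] and r ∈ [p,s]. Then for every n ≥ 1 and every vector v = (v_1,…,v_n) of positive reals, G_{p,q}(v) ≤ G_{r,s}(v). -/
open Finset in
/-- Gini mean of a vector of positive reals with real parameters `p`, `q`. -/
noncomputable def gini (p q : ℝ) {n : ℕ} (v : Fin n → ℝ) : ℝ :=
  if p = q then
    Real.exp ((∑ i, v i ^ p * Real.log (v i)) / ∑ i, v i ^ p)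
  else
    ((∑ i, v i ^ p) / ∑ i, v i ^ q) ^ (1 / (p - q))

/-!
The Gini mean is `exp` of a divided difference of `φ(t) = log ∑ vᵢ ^ t`: the slope of `φ` between
`p` and `q`, or `φ'(p)` when `p = q`. By Cauchy–Schwarz `φ'' ≥ 0`, and the divided difference of a
convex differentiable function is symmetric and monotone in each argument, so
`G_{p,q} ≤ G_{p,s} = G_{s,p} ≤ G_{s,r} = G_{r,s}`.
-/

open Finset Real Set

theorem dslope_comm {𝕜 E : Type*} [NontriviallyNormedField 𝕜] [NormedAddCommGroup E]
    [NormedSpace 𝕜 E] (f : 𝕜 → E) (a b : 𝕜) : dslope f a b = dslope f b a := by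
  rcases eq_or_ne b a with rfl | hba
  · rfl
  · rw [dslope_of_ne f hba, dslope_of_ne f hba.symm, slope_comm]

theorem ConvexOn.monotoneOn_dslope {S : Set ℝ} {f : ℝ → ℝ} {x : ℝ} (hf : ConvexOn ℝ S f)
    (hx : x ∈ S) (hfx : DifferentiableAt ℝ f x) : MonotoneOn (dslope f x) S := by
  intro y hy z hz hyz
  rcases hyz.eq_or_lt with rfl | hyz
  · rfl
  rcases eq_or_ne y x with rfl | hyx
  · rw [dslope_same, dslope_of_ne f hyz.ne']
    exact hf.deriv_le_slope hy hz hyz hfx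
  rcases eq_or_ne z x with rfl | hzx
  · rw [dslope_same, dslope_of_ne f hyx, slope_comm]
    exact hf.slope_le_deriv hy hz hyz hfx
  rw [dslope_of_ne f hyx, dslope_of_ne f hzx]
  exact hf.slope_mono hx ⟨hy, hyx⟩ ⟨hz, hzx⟩ hyz.le

section PowerSum

variable {ι : Type*} [Fintype ι] {v : ι → ℝ}

noncomputable def logPowerSum (v : ι → ℝ) (t : ℝ) : ℝ :=
  log (∑ i, v i ^ t)

theorem hasDerivAt_sum_rpow_mul (hv : ∀ i, 0 < v i) (c : ι → ℝ) (t : ℝ) :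
    HasDerivAt (fun t => ∑ i, v i ^ t * c i) (∑ i, v i ^ t * log (v i) * c i) t :=
  HasDerivAt.fun_sum fun i _ =>
    ((hasStrictDerivAt_const_rpow (hv i) t).hasDerivAt).mul_const (c i)

theorem hasDerivAt_sum_rpow (hv : ∀ i, 0 < v i) (t : ℝ) :
    HasDerivAt (fun t => ∑ i, v i ^ t) (∑ i, v i ^ t * log (v i)) t := by
  simpa using hasDerivAt_sum_rpow_mul hv 1 t

theorem sum_rpow_pos [Nonempty ι] (hv : ∀ i, 0 < v i) (t : ℝ) : 0 < ∑ i, v i ^ t :=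
  sum_pos (fun i _ => rpow_pos_of_pos (hv i) t) univ_nonempty

theorem sq_sum_rpow_mul_log_le (hv : ∀ i, 0 < v i) (t : ℝ) :
    (∑ i, v i ^ t * log (v i)) ^ 2 ≤ (∑ i, v i ^ t) * ∑ i, v i ^ t * log (v i) ^ 2 :=
  sum_sq_le_sum_mul_sum_of_sq_le_mul _ (fun i _ => (rpow_pos_of_pos (hv i) t).le)
    (fun i _ => mul_nonneg (rpow_pos_of_pos (hv i) t).le (sq_nonneg _))
    fun i _ => le_of_eq (by ring)

theorem hasDerivAt_logPowerSum [Nonempty ι] (hv : ∀ i, 0 < v i) (t : ℝ) :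
    HasDerivAt (logPowerSum v) ((∑ i, v i ^ t * log (v i)) / ∑ i, v i ^ t) t :=
  (hasDerivAt_sum_rpow hv t).log (sum_rpow_pos hv t).ne'

theorem convexOn_logPowerSum [Nonempty ι] (hv : ∀ i, 0 < v i) :
    ConvexOn ℝ univ (logPowerSum v) := by
  have hφ'' : ∀ t : ℝ, HasDerivAt (fun t => (∑ i, v i ^ t * log (v i)) / ∑ i, v i ^ t)
      (((∑ i, v i ^ t * log (v i) * log (v i)) * (∑ i, v i ^ t)
        - (∑ i, v i ^ t * log (v i)) * ∑ i, v i ^ t * log (v i)) / (∑ i, v i ^ t) ^ 2) t :=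
    fun t => (hasDerivAt_sum_rpow_mul hv _ t).div (hasDerivAt_sum_rpow hv t)
      (sum_rpow_pos hv t).ne'
  refine convexOn_of_hasDerivWithinAt2_nonneg convex_univ
    (fun t _ => (hasDerivAt_logPowerSum hv t).continuousAt.continuousWithinAt)
    (fun t _ => (hasDerivAt_logPowerSum hv t).hasDerivWithinAt)
    (fun t _ => (hφ'' t).hasDerivWithinAt) fun t _ => ?_
  have hCS := sq_sum_rpow_mul_log_le hv t
  simp only [mul_assoc, ← sq] at hCS ⊢
  exact div_nonneg (by linarith) (sq_nonneg _)

end PowerSum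

theorem gini_eq_exp_dslope {n : ℕ} [Nonempty (Fin n)] {v : Fin n → ℝ} (hv : ∀ i, 0 < v i)
    (p q : ℝ) : gini p q v = exp (dslope (logPowerSum v) p q) := by
  rcases eq_or_ne q p with rfl | hqp
  · rw [gini, if_pos rfl, dslope_same, (hasDerivAt_logPowerSum hv q).deriv]
  · have hp := sum_rpow_pos hv p
    have hq := sum_rpow_pos hv q
    rw [gini, if_neg hqp.symm, rpow_def_of_pos (div_pos hp hq), log_div hp.ne' hq.ne',
      dslope_of_ne _ hqp, slope_def_field, logPowerSum, logPowerSum,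
      mul_one_div, ← neg_div_neg_eq, neg_sub, neg_sub]

theorem stmt_1_general (p q r s : ℝ) (hq : q ∈ Set.Icc p s) (hr : r ∈ Set.Icc p s) :
    ∀ n : ℕ, 1 ≤ n → ∀ v : Fin n → ℝ, (∀ i, 0 < v i) →
      gini p q v ≤ gini r s v := by
  intro n hn v hv
  have : Nonempty (Fin n) := Fin.pos_iff_nonempty.mp hn
  have hφ := convexOn_logPowerSum hv
  have hφ' : ∀ t, DifferentiableAt ℝ (logPowerSum v) t :=
    fun t => (hasDerivAt_logPowerSum hv t).differentiableAt
  rw [gini_eq_exp_dslope hv, gini_eq_exp_dslope hv, exp_le_exp]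
  calc dslope (logPowerSum v) p q
      ≤ dslope (logPowerSum v) p s := hφ.monotoneOn_dslope trivial (hφ' p) trivial trivial hq.2
    _ = dslope (logPowerSum v) s p := dslope_comm _ p s
    _ ≤ dslope (logPowerSum v) s r := hφ.monotoneOn_dslope trivial (hφ' s) trivial trivial hr.1
    _ = dslope (logPowerSum v) r s := dslope_comm _ s r

/-- if p ≤ s, q ∈ [p,s], r ∈ [p,s], then G_{p,q} ≤ G_{r,s} on every
vector of positive reals. -/
theorem stmt_1 (p q r s : ℝ) (hps : p ≤ s) (hq : q ∈ Set.Icc p s) (hr : r ∈ Set.Icc p s) :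
    ∀ n : ℕ, 1 ≤ n → ∀ v : Fin n → ℝ, (∀ i, 0 < v i) →
      gini p q v ≤ gini r s v :=
  stmt_1_general p q r s hq hr
end

section
/- Let g : ℝ → ℝ satisfy: g(x) < 0 for all x < 0; g is strictly decreasing on (−∞,0); g is continuous on (−∞,0); g(g(x)) = x for all x < 0; and g(x) → −∞ as x → 0⁻. Define Y = {(x,y) ∈ ℝ² : x ≥ 0, or (x < 0 and y ≥ g(x))}. Then Y is an interval-type set for ≼: whenever (p,q) ∈ Y, (r,s) ∈ Y, and (a,b) ∈ ℝ² satisfy (p,q) ≼ (a,b) and (a,b) ≼ (r,s), it follows that (a,b) ∈ Y. -/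
/-!
In the open negative quadrant `Y` is the epigraph of `g` (elsewhere it is everything), and
since `g` is an antitone involution of `(-∞, 0)` the condition `g x ≤ y` is symmetric in `x`
and `y`. It can therefore be read off the unordered pair as `g (min x y) ≤ max x y`, which
survives raising the minimum (`g` is antitone) and raising the maximum.
-/

namespace Set

variable {α : Type*} [LinearOrder α] {g : α → α} {s : Set α}

theorem LeftInvOn.apply_le_comm_of_antitoneOn (hinv : LeftInvOn g g s) (hmaps : MapsTo g s s)
    (hanti : AntitoneOn g s) {x y : α} (hx : x ∈ s) (hy : y ∈ s) :
    g x ≤ y ↔ g y ≤ x := by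
  have swap : ∀ {u v : α}, u ∈ s → v ∈ s → g u ≤ v → g v ≤ u := fun hu hv h ↦
    hinv hu ▸ hanti (hmaps hu) hv h
  exact ⟨swap hx hy, swap hy hx⟩

theorem LeftInvOn.apply_le_iff_apply_min_le_max (hinv : LeftInvOn g g s) (hmaps : MapsTo g s s)
    (hanti : AntitoneOn g s) {x y : α} (hx : x ∈ s) (hy : y ∈ s) :
    g x ≤ y ↔ g (min x y) ≤ max x y := by
  rcases le_total x y with hxy | hyx
  · rw [min_eq_left hxy, max_eq_right hxy]
  · rw [min_eq_right hyx, max_eq_left hyx, hinv.apply_le_comm_of_antitoneOn hmaps hanti hx hy]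

theorem LeftInvOn.apply_le_of_min_le_of_max_le (hinv : LeftInvOn g g s) (hmaps : MapsTo g s s)
    (hanti : AntitoneOn g s) {p q a b : α} (hp : p ∈ s) (hq : q ∈ s) (ha : a ∈ s) (hb : b ∈ s)
    (hmin : min p q ≤ min a b) (hmax : max p q ≤ max a b) (hpq : g p ≤ q) : g a ≤ b := by
  rw [hinv.apply_le_iff_apply_min_le_max hmaps hanti hp hq] at hpq
  rw [hinv.apply_le_iff_apply_min_le_max hmaps hanti ha hb]
  calc g (min a b) ≤ g (min p q) := hanti (min_rec' (· ∈ s) hp hq) (min_rec' (· ∈ s) ha hb) hmin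
    _ ≤ max p q := hpq
    _ ≤ max a b := hmax

end Set

theorem stmt_4_general (g : ℝ → ℝ)
    (hgneg : ∀ x : ℝ, x < 0 → g x < 0)
    (hganti : StrictAntiOn g (Set.Iio (0 : ℝ)))
    (hginv : ∀ x : ℝ, x < 0 → g (g x) = x)
    (p q a b : ℝ)
    (hpq : 0 ≤ p ∨ (p < 0 ∧ g p ≤ q))
    (h1 : min p q ≤ min a b ∧ max p q ≤ max a b) :
    0 ≤ a ∨ (a < 0 ∧ g a ≤ b) := by
  rcases le_or_gt 0 a with ha | ha
  · exact Or.inl ha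
  refine Or.inr ⟨ha, ?_⟩
  rcases le_or_gt 0 b with hb | hb
  · exact (hgneg a ha).le.trans hb
  have hpq_neg : max p q < 0 := h1.2.trans_lt (max_lt ha hb)
  have hp : p < 0 := (le_max_left p q).trans_lt hpq_neg
  have hq : q < 0 := (le_max_right p q).trans_lt hpq_neg
  have hgp : g p ≤ q := hpq.resolve_left hp.not_ge |>.2
  have hinv : Set.LeftInvOn g g (Set.Iio 0) := hginv
  exact hinv.apply_le_of_min_le_of_max_le hgneg hganti.antitoneOn hp hq ha hb h1.1 h1.2 hgp

/-- let g be negative, strictly decreasing, continuous and an involution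
on (−∞,0), with g(x) → −∞ as x → 0⁻.  Then
Y = {(x,y) : x ≥ 0 or (x < 0 and y ≥ g x)} is an interval-type set for the order
(x,y) ≼ (x',y') ⟺ min(x,y) ≤ min(x',y') ∧ max(x,y) ≤ max(x',y'). -/
theorem stmt_4 (g : ℝ → ℝ)
    (hgneg : ∀ x : ℝ, x < 0 → g x < 0)
    (hganti : StrictAntiOn g (Set.Iio (0 : ℝ)))
    (hgcont : ContinuousOn g (Set.Iio (0 : ℝ)))
    (hginv : ∀ x : ℝ, x < 0 → g (g x) = x)
    (hglim : Filter.Tendsto g (nhdsWithin 0 (Set.Iio (0 : ℝ))) Filter.atBot)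
    (p q r s a b : ℝ)
    (hpq : 0 ≤ p ∨ (p < 0 ∧ g p ≤ q))
    (hrs : 0 ≤ r ∨ (r < 0 ∧ g r ≤ s))
    (h1 : min p q ≤ min a b ∧ max p q ≤ max a b)
    (h2 : min a b ≤ min r s ∧ max a b ≤ max r s) :
    0 ≤ a ∨ (a < 0 ∧ g a ≤ b) :=
  stmt_4_general g hgneg hganti hginv p q a b hpq h1
end

section
/- Let f : ℝ → ℝ satisfy: f(x) > 0 for all x > 0; f is strictly decreasing on (0,∞); f is continuous on (0,∞); f(f(x)) = x for all x > 0; and f(x) → +∞ as x → 0⁺. Let g : ℝ → ℝ satisfy: g(x) < 0 for all x < 0; g is strictly decreasing on (−∞,0); g is continuous on (−∞,0); g(g(x)) = x for all x < 0; and g(x) → −∞ as x → 0⁻. Define Z = {(x,y) ∈ ℝ² : (x < 0 and y ≥ g(x)), or x = 0, or (x > 0 and y ≤ f(x))}. Then Z is an interval-type set for ≼: whenever (p,q) ∈ Z, (r,s) ∈ Z, and (a,b) ∈ ℝ² satisfy (p,q) ≼ (a,b) and (a,b) ≼ (r,s), it follows that (a,b) ∈ Z. -/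
/-!
For an antitone involution `f` of `(0, ∞)`, the condition `y ≤ f x` on a point with positive
coordinates is symmetric in `x, y` and reads `max x y ≤ f (min x y)`. Going down in `≼` lowers
`max` and, through `f`, raises `f ∘ min`, so the part of `Z` in the open first quadrant is
`≼`-downward closed, while points with `a > 0 ≥ b` lie in `Z` anyway. The reflection
`(x, y) ↦ (-x, -y)` reverses `≼` and turns `g` into the antitone involution `x ↦ -g (-x)` of
`(0, ∞)`, so the same argument shows that the part of `Z` with `a < 0` is upward closed.
-/

open Set

section AntitoneInvolution

variable {f : ℝ → ℝ}

lemma le_apply_comm (hf : AntitoneOn f (Ioi 0)) (hinv : ∀ x, 0 < x → f (f x) = x)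
    {x y : ℝ} (hx : 0 < x) (hy : 0 < y) (h : y ≤ f x) : x ≤ f y := by
  have := hf (mem_Ioi.2 hy) (mem_Ioi.2 (hy.trans_le h)) h
  rwa [hinv x hx] at this

lemma le_apply_iff_max_le_apply_min (hf : AntitoneOn f (Ioi 0))
    (hinv : ∀ x, 0 < x → f (f x) = x) {x y : ℝ} (hx : 0 < x) (hy : 0 < y) :
    y ≤ f x ↔ max x y ≤ f (min x y) := by
  rcases le_total x y with h | h
  · rw [min_eq_left h, max_eq_right h]
  · rw [min_eq_right h, max_eq_left h]
    exact ⟨le_apply_comm hf hinv hx hy, le_apply_comm hf hinv hy hx⟩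

lemma le_apply_of_min_le_of_max_le (hpos : ∀ x, 0 < x → 0 < f x) (hf : AntitoneOn f (Ioi 0))
    (hinv : ∀ x, 0 < x → f (f x) = x) {a b r s : ℝ} (ha : 0 < a) (hrs : 0 < r → s ≤ f r)
    (hmin : min a b ≤ min r s) (hmax : max a b ≤ max r s) : b ≤ f a := by
  rcases le_or_gt b 0 with hb | hb
  · exact hb.trans (hpos a ha).le
  have hab : 0 < min a b := lt_min ha hb
  have hr : 0 < r := hab.trans_le (hmin.trans (min_le_left r s))
  have hs : 0 < s := hab.trans_le (hmin.trans (min_le_right r s))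
  rw [le_apply_iff_max_le_apply_min hf hinv ha hb]
  calc max a b ≤ max r s := hmax
    _ ≤ f (min r s) := (le_apply_iff_max_le_apply_min hf hinv hr hs).1 (hrs hr)
    _ ≤ f (min a b) := hf (mem_Ioi.2 hab) (mem_Ioi.2 (hab.trans_le hmin)) hmin

lemma apply_le_of_le_min_of_le_max {g : ℝ → ℝ} (hneg : ∀ x, x < 0 → g x < 0)
    (hg : AntitoneOn g (Iio 0)) (hinv : ∀ x, x < 0 → g (g x) = x) {a b p q : ℝ} (ha : a < 0)
    (hpq : p < 0 → g p ≤ q) (hmin : min p q ≤ min a b) (hmax : max p q ≤ max a b) :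
    g a ≤ b := by
  set f : ℝ → ℝ := fun x => -g (-x)
  have hpos : ∀ x, 0 < x → 0 < f x := fun x hx => neg_pos.2 (hneg (-x) (neg_neg_of_pos hx))
  have hf : AntitoneOn f (Ioi 0) := fun x hx y hy hxy =>
    neg_le_neg (hg (mem_Iio.2 (neg_lt_zero.2 hy)) (mem_Iio.2 (neg_lt_zero.2 hx)) (neg_le_neg hxy))
  have hfinv : ∀ x, 0 < x → f (f x) = x := fun x hx => by
    simp only [f, neg_neg, hinv (-x) (neg_lt_zero.2 hx)]
  have hrs : 0 < -p → -q ≤ f (-p) := fun hp => by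
    simpa only [f, neg_neg, neg_le_neg_iff] using hpq (neg_pos.1 hp)
  have key := le_apply_of_min_le_of_max_le (b := -b) hpos hf hfinv (neg_pos.2 ha) hrs
    (by simpa only [min_neg_neg, neg_le_neg_iff] using hmax)
    (by simpa only [max_neg_neg, neg_le_neg_iff] using hmin)
  simpa only [f, neg_neg, neg_le_neg_iff] using key

end AntitoneInvolution

theorem stmt_5_general (f g : ℝ → ℝ)
    (hfpos : ∀ x : ℝ, 0 < x → 0 < f x)
    (hfanti : StrictAntiOn f (Set.Ioi (0 : ℝ)))
    (hfinv : ∀ x : ℝ, 0 < x → f (f x) = x)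
    (hgneg : ∀ x : ℝ, x < 0 → g x < 0)
    (hganti : StrictAntiOn g (Set.Iio (0 : ℝ)))
    (hginv : ∀ x : ℝ, x < 0 → g (g x) = x)
    (p q r s a b : ℝ)
    (hpq : (p < 0 ∧ g p ≤ q) ∨ p = 0 ∨ (0 < p ∧ q ≤ f p))
    (hrs : (r < 0 ∧ g r ≤ s) ∨ r = 0 ∨ (0 < r ∧ s ≤ f r))
    (h1 : min p q ≤ min a b ∧ max p q ≤ max a b)
    (h2 : min a b ≤ min r s ∧ max a b ≤ max r s) :
    (a < 0 ∧ g a ≤ b) ∨ a = 0 ∨ (0 < a ∧ b ≤ f a) := by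
  have hpq' : p < 0 → g p ≤ q := fun hp => by
    rcases hpq with ⟨-, h⟩ | rfl | ⟨h, -⟩
    exacts [h, (lt_irrefl 0 hp).elim, (lt_asymm h hp).elim]
  have hrs' : 0 < r → s ≤ f r := fun hr => by
    rcases hrs with ⟨h, -⟩ | rfl | ⟨-, h⟩
    exacts [(lt_asymm h hr).elim, (lt_irrefl 0 hr).elim, h]
  rcases lt_trichotomy a 0 with ha | ha | ha
  · exact Or.inl
      ⟨ha, apply_le_of_le_min_of_le_max hgneg hganti.antitoneOn hginv ha hpq' h1.1 h1.2⟩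
  · exact Or.inr (Or.inl ha)
  · exact Or.inr (Or.inr
      ⟨ha, le_apply_of_min_le_of_max_le hfpos hfanti.antitoneOn hfinv ha hrs' h2.1 h2.2⟩)

/-- with f as in Statement 3 and g as in Statement 4, the set
Z = {(x,y) : (x < 0 and y ≥ g x) or x = 0 or (x > 0 and y ≤ f x)} is an
interval-type set for the order
(x,y) ≼ (x',y') ⟺ min(x,y) ≤ min(x',y') ∧ max(x,y) ≤ max(x',y'). -/
theorem stmt_5 (f g : ℝ → ℝ)
    (hfpos : ∀ x : ℝ, 0 < x → 0 < f x)
    (hfanti : StrictAntiOn f (Set.Ioi (0 : ℝ)))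
    (hfcont : ContinuousOn f (Set.Ioi (0 : ℝ)))
    (hfinv : ∀ x : ℝ, 0 < x → f (f x) = x)
    (hflim : Filter.Tendsto f (nhdsWithin 0 (Set.Ioi (0 : ℝ))) Filter.atTop)
    (hgneg : ∀ x : ℝ, x < 0 → g x < 0)
    (hganti : StrictAntiOn g (Set.Iio (0 : ℝ)))
    (hgcont : ContinuousOn g (Set.Iio (0 : ℝ)))
    (hginv : ∀ x : ℝ, x < 0 → g (g x) = x)
    (hglim : Filter.Tendsto g (nhdsWithin 0 (Set.Iio (0 : ℝ))) Filter.atBot)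
    (p q r s a b : ℝ)
    (hpq : (p < 0 ∧ g p ≤ q) ∨ p = 0 ∨ (0 < p ∧ q ≤ f p))
    (hrs : (r < 0 ∧ g r ≤ s) ∨ r = 0 ∨ (0 < r ∧ s ≤ f r))
    (h1 : min p q ≤ min a b ∧ max p q ≤ max a b)
    (h2 : min a b ≤ min r s ∧ max a b ≤ max r s) :
    (a < 0 ∧ g a ≤ b) ∨ a = 0 ∨ (0 < a ∧ b ≤ f a) :=
  stmt_5_general f g hfpos hfanti hfinv hgneg hganti hginv p q r s a b hpq hrs h1 h2
end
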